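/- Under the Reifenberg C^{1,Dini} condition at 0 with normals n_r, for each fixed θ ∈ (0,1) there is a constant S(θ) ≥ 1 (independent of r) such that |n_r − n_{θr}| ≤ S(θ)·ω(r) for all 0 < r ≤ r₀. -/

import Mathlib

/-!
Both slabs contain `∂Ω ∩ B_{θr}`, so the half-ball `B_{θr} ∩ {⟪n_r, x⟫ > rω(r)}` lies in the
half-space `{⟪n_{θr}, x⟫ > -rω(r)}` (the width `θr ω(θr)` is at most `rω(r)`). Testing this on
points in the direction `n_r - n_{θr}`, where the two unit normals have opposite inner products
`±‖n_r - n_{θr}‖ / 2`, gives `θr ‖n_r - n_{θr}‖ ≤ 2rω(r)`, i.e. `S(θ) = 2/θ`.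
-/

open scoped RealInnerProductSpace

section SlabInclusion

variable {E : Type*} [NormedAddCommGroup E] [InnerProductSpace ℝ E] {a b : E}

lemma real_inner_sub_of_norm_eq (hab : ‖a‖ = ‖b‖) : ⟪a, a - b⟫ = ‖a - b‖ ^ 2 / 2 := by
  rw [norm_sub_sq_real, inner_sub_right, real_inner_self_eq_norm_sq, ← hab]
  ring

lemma real_inner_sub_of_norm_eq' (hab : ‖a‖ = ‖b‖) : ⟪b, a - b⟫ = -(‖a - b‖ ^ 2 / 2) := by
  rw [← neg_sub, inner_neg_right, norm_neg, real_inner_sub_of_norm_eq hab.symm]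

lemma mul_norm_sub_le_of_halfBall_subset (hab : ‖a‖ = ‖b‖) {ρ ε : ℝ} (hε : 0 ≤ ε)
    (hsub : Metric.ball 0 ρ ∩ {x | ε < ⟪a, x⟫} ⊆ {x | -ε < ⟪b, x⟫}) :
    ρ * ‖a - b‖ ≤ 2 * ε := by
  by_contra! hlt
  have hδ : 0 < ‖a - b‖ := (norm_nonneg _).lt_of_ne' fun h ↦ by
    rw [h, mul_zero] at hlt
    linarith
  obtain ⟨τ, hετ, hτρ⟩ := exists_between ((div_lt_iff₀ hδ).2 hlt)
  have hετ' : 2 * ε < τ * ‖a - b‖ := (div_lt_iff₀ hδ).1 hετ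
  have hτ : 0 < τ := (div_nonneg (by linarith) hδ.le).trans_lt hετ
  set x := (τ / ‖a - b‖) • (a - b)
  have hx : ‖x‖ = τ := by
    rw [norm_smul, Real.norm_of_nonneg (div_pos hτ hδ).le, div_mul_cancel₀ _ hδ.ne']
  have hax : ⟪a, x⟫ = τ * ‖a - b‖ / 2 := by
    rw [real_inner_smul_right, real_inner_sub_of_norm_eq hab]
    field_simp
  have hbx : ⟪b, x⟫ = -(τ * ‖a - b‖ / 2) := by
    rw [real_inner_smul_right, real_inner_sub_of_norm_eq' hab]
    field_simp
  have : -ε < ⟪b, x⟫ :=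
    hsub ⟨mem_ball_zero_iff.2 (hx.trans_lt hτρ), show ε < ⟪a, x⟫ by rw [hax]; linarith⟩
  rw [hbx] at this
  linarith

end SlabInclusion

theorem reifenberg_normals_close_general (n : ℕ)
    (Ω : Set (EuclideanSpace ℝ (Fin n)))
    (nvec : ℝ → EuclideanSpace ℝ (Fin n)) (ω : ℝ → ℝ) (r₀ : ℝ)
    (hωnonneg : ∀ t, 0 ≤ t → 0 ≤ ω t)
    (hωmono : ∀ s t, 0 ≤ s → s ≤ t → ω s ≤ ω t)
    (hunit : ∀ r, 0 < r → r ≤ r₀ → ‖nvec r‖ = 1)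
    (hrei : ∀ r, 0 < r → r ≤ r₀ →
      (Metric.ball 0 r ∩ {x : EuclideanSpace ℝ (Fin n) | r * ω r < ⟪nvec r, x⟫} ⊆
        Metric.ball 0 r ∩ Ω) ∧
      (Metric.ball 0 r ∩ Ω ⊆
        Metric.ball 0 r ∩ {x : EuclideanSpace ℝ (Fin n) | -(r * ω r) < ⟪nvec r, x⟫}))
    (θ : ℝ) (hθ0 : 0 < θ) (hθ1 : θ < 1) :
    ∃ S : ℝ, 1 ≤ S ∧ ∀ r, 0 < r → r ≤ r₀ → ‖nvec r - nvec (θ * r)‖ ≤ S * ω r := by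
  refine ⟨2 / θ, by rw [le_div_iff₀ hθ0]; linarith, fun r hr hrr₀ ↦ ?_⟩
  have hθr : 0 < θ * r := mul_pos hθ0 hr
  have hθrr : θ * r ≤ r := mul_le_of_le_one_left hr.le hθ1.le
  have hwidth : θ * r * ω (θ * r) ≤ r * ω r :=
    mul_le_mul hθrr (hωmono _ _ hθr.le hθrr) (hωnonneg _ hθr.le) hr.le
  have hsub : Metric.ball 0 (θ * r) ∩ {x | r * ω r < ⟪nvec r, x⟫} ⊆
      {x | -(r * ω r) < ⟪nvec (θ * r), x⟫} := by
    rintro x ⟨hx, hax⟩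
    have hxΩ := ((hrei r hr hrr₀).1 ⟨Metric.ball_subset_ball hθrr hx, hax⟩).2
    have hbx : -(θ * r * ω (θ * r)) < ⟪nvec (θ * r), x⟫ :=
      ((hrei _ hθr (hθrr.trans hrr₀)).2 ⟨hx, hxΩ⟩).2
    exact (neg_le_neg hwidth).trans_lt hbx
  have key := mul_norm_sub_le_of_halfBall_subset
    ((hunit r hr hrr₀).trans (hunit _ hθr (hθrr.trans hrr₀)).symm)
    (mul_nonneg hr.le (hωnonneg r hr.le)) hsub
  rw [div_mul_eq_mul_div, le_div_iff₀ hθ0]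
  refine le_of_mul_le_mul_left ?_ hr
  linarith

/-- Lemma 1.4: under the (r₀,ω)-Reifenberg C^{1,Dini} condition at 0, for each fixed
θ ∈ (0,1) there is S(θ) ≥ 1 with |n_r − n_{θr}| ≤ S(θ)·ω(r) for all 0 < r ≤ r₀. -/
theorem reifenberg_normals_close (n : ℕ) (hn : 2 ≤ n)
    (Ω : Set (EuclideanSpace ℝ (Fin n))) (hΩbdd : Bornology.IsBounded Ω)
    (h0 : (0 : EuclideanSpace ℝ (Fin n)) ∈ frontier Ω)
    (nvec : ℝ → EuclideanSpace ℝ (Fin n)) (ω : ℝ → ℝ) (r₀ : ℝ) (hr₀ : 0 < r₀)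
    (hωnonneg : ∀ t, 0 ≤ t → 0 ≤ ω t)
    (hωmono : ∀ s t, 0 ≤ s → s ≤ t → ω s ≤ ω t)
    (hω0 : ω 0 = 0)
    (hunit : ∀ r, 0 < r → r ≤ r₀ → ‖nvec r‖ = 1)
    (hrei : ∀ r, 0 < r → r ≤ r₀ →
      (Metric.ball 0 r ∩ {x : EuclideanSpace ℝ (Fin n) | r * ω r < ⟪nvec r, x⟫} ⊆
        Metric.ball 0 r ∩ Ω) ∧
      (Metric.ball 0 r ∩ Ω ⊆
        Metric.ball 0 r ∩ {x : EuclideanSpace ℝ (Fin n) | -(r * ω r) < ⟪nvec r, x⟫}))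
    (θ : ℝ) (hθ0 : 0 < θ) (hθ1 : θ < 1) :
    ∃ S : ℝ, 1 ≤ S ∧ ∀ r, 0 < r → r ≤ r₀ → ‖nvec r - nvec (θ * r)‖ ≤ S * ω r :=
  reifenberg_normals_close_general n Ω nvec ω r₀ hωnonneg hωmono hunit hrei θ hθ0 hθ1
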